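/- Drift bound (Lemma on expected change): for every ε > 0 there exists N such that for all n ≥ N, every graph X on [n], every edge e of K_n, and every graph G on |V| ≤ L vertices with |E| ≥ 2 edges, one step of the Glauber dynamics from X satisfies E[(N_G(X(1),e) − N_G(X,e))/n^{|V|−2}] ≤ (2/C(n,2))·|E|·(|E|−1)·[ −r_G(X,e)^{|E|−1} + φ(r̄(X))·r̄(X)^{|E|−2} ] + ε/n². -/

import Mathlib

open Finset

open scoped Classical

noncomputable section

/-- The set of edges of the complete graph `K_n` on vertex set `[n] = Fin n`:
unordered pairs of distinct vertices. -/
abbrev EdgeK (n : ℕ) : Type := {e : Sym2 (Fin n) // ¬ e.IsDiag}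

/-- A graph on `[n]`, identified with an element `X ∈ {0,1}^{E(K_n)}`. -/
abbrev Config (n : ℕ) : Type := EdgeK n → Bool

/-- The image of an edge under an injection of vertex sets. -/
def mapEdge {m n : ℕ} (v : Fin m ↪ Fin n) (a : EdgeK m) : EdgeK n :=
  ⟨a.1.map v, fun h => a.2 ((Sym2.isDiag_map v.injective).mp h)⟩

/-- The complete graph `K_n` as a configuration. -/
def fullConfig (n : ℕ) : Config n := fun _ => true

/-- `X ∪ {e}`. -/
def addEdge {n : ℕ} (X : Config n) (e : EdgeK n) : Config n :=
  fun f => if f = e then true else X f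

/-- `X_{e+}` (for `b = true`), resp. `X_{e-}` (for `b = false`). -/
def setEdge {n : ℕ} (X : Config n) (e : EdgeK n) (b : Bool) : Config n :=
  fun f => if f = e then b else X f

/-- `N_G(X)`: the number of tuples of `m` distinct vertices of `[n]` such that every
edge of the pattern graph `G` (a graph on `m` labelled vertices) is mapped to an edge of `X`. -/
def copyCount {n m : ℕ} (X : Config n) (G : Finset (EdgeK m)) : ℕ :=
  (univ.filter fun v : Fin m ↪ Fin n => ∀ a ∈ G, X (mapEdge v a) = true).card

/-- `N_G(X, e)`: the number of such tuples for `X ∪ {e}` which moreover use the edge `e`. -/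
def rootedCount {n m : ℕ} (X : Config n) (G : Finset (EdgeK m)) (e : EdgeK n) : ℕ :=
  (univ.filter fun v : Fin m ↪ Fin n =>
    (∃ a ∈ G, mapEdge v a = e) ∧ ∀ a ∈ G, addEdge X e (mapEdge v a) = true).card

/-- `N_G(X, e, e')`: the number of such tuples for `X ∪ {e, e'}` which use both `e` and `e'`. -/
def rooted2Count {n m : ℕ} (X : Config n) (G : Finset (EdgeK m)) (e e' : EdgeK n) : ℕ :=
  (univ.filter fun v : Fin m ↪ Fin n =>
    (∃ a ∈ G, mapEdge v a = e) ∧ (∃ a ∈ G, mapEdge v a = e') ∧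
      ∀ a ∈ G, addEdge (addEdge X e) e' (mapEdge v a) = true).card

/-- The number of edges of the graph `X`. -/
def edgeCount {n : ℕ} (X : Config n) : ℕ := (univ.filter fun e => X e = true).card

/-- Hamming distance between two graphs: the number of edges of disagreement. -/
def hamDist {n : ℕ} (X Y : Config n) : ℕ := (univ.filter fun f => X f ≠ Y f).card

/-- The Hamiltonian `H(X) = ∑ i, β i * N_{G_i}(X) / n^(|V_i| - 2)`. -/
def ergmH {s : ℕ} (V : Fin s → ℕ) (Pt : ∀ i, Finset (EdgeK (V i))) (β : Fin s → ℝ)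
    (n : ℕ) (X : Config n) : ℝ :=
  ∑ i, β i * (copyCount X (Pt i) : ℝ) / (n : ℝ) ^ (V i - 2)

/-- The Gibbs measure `p_n(X) = exp(H(X)) / Z_n`. -/
def gibbs {s : ℕ} (V : Fin s → ℕ) (Pt : ∀ i, Finset (EdgeK (V i))) (β : Fin s → ℝ)
    (n : ℕ) (X : Config n) : ℝ :=
  Real.exp (ergmH V Pt β n X) / ∑ Y : Config n, Real.exp (ergmH V Pt β n Y)

/-- `∂_e H(X) = H(X_{e+}) - H(X_{e-})`. -/
def dH {s : ℕ} (V : Fin s → ℕ) (Pt : ∀ i, Finset (EdgeK (V i))) (β : Fin s → ℝ)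
    (n : ℕ) (X : Config n) (e : EdgeK n) : ℝ :=
  ergmH V Pt β n (setEdge X e true) - ergmH V Pt β n (setEdge X e false)

/-- The transition kernel of the Glauber dynamics: a uniformly random edge `e` of `K_n` is
chosen and set present with probability `exp(∂_e H(X)) /(1 + exp(∂_e H(X)))`, absent
otherwise. -/
def glauber {s : ℕ} (V : Fin s → ℕ) (Pt : ∀ i, Finset (EdgeK (V i))) (β : Fin s → ℝ)
    (n : ℕ) (X Y : Config n) : ℝ :=
  ((n.choose 2 : ℝ))⁻¹ * ∑ e : EdgeK n,
    ((if Y = setEdge X e true then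
        Real.exp (dH V Pt β n X e) / (1 + Real.exp (dH V Pt β n X e)) else 0)
      + (if Y = setEdge X e false then 1 / (1 + Real.exp (dH V Pt β n X e)) else 0))

/-- The `t`-step distribution of the Markov chain with one-step kernel `K`,
started from a given state. -/
def kernelStep {n : ℕ} (K : Config n → Config n → ℝ) : ℕ → Config n → Config n → ℝ
  | 0 => fun x y => if y = x then 1 else 0
  | (t+1) => fun x y => ∑ z, kernelStep K t x z * K z y

/-- Total variation distance between two (signed) distributions on `Config n`. -/
def tvDist {n : ℕ} (μ ν : Config n → ℝ) : ℝ := (∑ Y, |μ Y - ν Y|) / 2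

/-- `mixes K π t` says that after `t` steps the chain with kernel `K` is within total
variation distance `e⁻¹` of `π` from every starting state. -/
def mixes {n : ℕ} (K : Config n → Config n → ℝ) (π : Config n → ℝ) (t : ℕ) : Prop :=
  ∀ x, tvDist (kernelStep K t x) π ≤ Real.exp (-1)

/-- The mixing time: the least `t` such that from every starting state the chain is within
total variation distance `e⁻¹` of `π`. -/
def mixingTime {n : ℕ} (K : Config n → Config n → ℝ) (π : Config n → ℝ) : ℕ :=
  sInf {t | mixes K π t}

/-- `Ψ(p) = ∑ i, 2 β_i |E_i| p^(|E_i| - 1)`. -/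
def PsiF {s : ℕ} {V : Fin s → ℕ} (Pt : ∀ i, Finset (EdgeK (V i))) (β : Fin s → ℝ)
    (p : ℝ) : ℝ :=
  ∑ i, 2 * β i * ((Pt i).card : ℝ) * p ^ ((Pt i).card - 1)

/-- `φ(p) = exp(Ψ(p)) / (1 + exp(Ψ(p)))`. -/
def phiF {s : ℕ} {V : Fin s → ℕ} (Pt : ∀ i, Finset (EdgeK (V i))) (β : Fin s → ℝ)
    (p : ℝ) : ℝ :=
  Real.exp (PsiF Pt β p) / (1 + Real.exp (PsiF Pt β p))

/-- High temperature phase: `φ(p) = p` has a unique solution `p*` (in `[0,1]`), which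
moreover satisfies `φ'(p*) < 1`. -/
def HighTemp {s : ℕ} {V : Fin s → ℕ} (Pt : ∀ i, Finset (EdgeK (V i))) (β : Fin s → ℝ)
    (pstar : ℝ) : Prop :=
  pstar ∈ Set.Icc (0:ℝ) 1 ∧ phiF Pt β pstar = pstar ∧
    (∀ q ∈ Set.Icc (0:ℝ) 1, phiF Pt β q = q → q = pstar) ∧
    deriv (phiF Pt β) pstar < 1

/-- Low temperature phase: `φ(p) = p` has at least two solutions `p` with `φ'(p) < 1`. -/
def LowTemp {s : ℕ} {V : Fin s → ℕ} (Pt : ∀ i, Finset (EdgeK (V i))) (β : Fin s → ℝ) : Prop :=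
  ∃ p₁ p₂ : ℝ, p₁ ∈ Set.Icc (0:ℝ) 1 ∧ p₂ ∈ Set.Icc (0:ℝ) 1 ∧ p₁ ≠ p₂ ∧
    phiF Pt β p₁ = p₁ ∧ phiF Pt β p₂ = p₂ ∧
    deriv (phiF Pt β) p₁ < 1 ∧ deriv (phiF Pt β) p₂ < 1

/-- `r_G(X, e) = (N_G(X,e) / (2 |E(G)| n^(|V(G)|-2)))^(1/(|E(G)|-1))`. -/
def rG {n m : ℕ} (X : Config n) (G : Finset (EdgeK m)) (e : EdgeK n) : ℝ :=
  ((rootedCount X G e : ℝ) / (2 * (G.card : ℝ) * (n : ℝ) ^ (m - 2))) ^ (((G.card : ℝ) - 1)⁻¹)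

/-- The set of values `r_G(X,e)` over all edges `e` of `K_n` and all graphs `G` on at
most `L` vertices with at least two edges. -/
def rSet (L n : ℕ) (X : Config n) : Set ℝ :=
  {r | ∃ m, m ≤ L ∧ ∃ G : Finset (EdgeK m), 2 ≤ G.card ∧ ∃ e : EdgeK n, r = rG X G e}

/-- `r̄(X)`: the maximum of `r_G(X,e)` over all edges `e` of `K_n` and all graphs `G` on
at most `L` vertices with at least two edges. -/
def rbar (L n : ℕ) (X : Config n) : ℝ := sSup (rSet L n X)

/-- `r_min(X)`: the corresponding minimum. -/
def rmin (L n : ℕ) (X : Config n) : ℝ := sInf (rSet L n X)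

/-- The cycle `C_l` on `l` labelled vertices, as a pattern graph. -/
def cyclePattern (l : ℕ) [NeZero l] : Finset (EdgeK l) :=
  univ.filter fun e => ∃ i : Fin l, e.1 = s(i, i + 1)

/-- The probability of a length-`T` trajectory `w` for the chain with kernel `K`
started at `x`. -/
def trajProb {n T : ℕ} (K : Config n → Config n → ℝ) (x : Config n)
    (w : Fin (T+1) → Config n) : ℝ :=
  (if w 0 = x then 1 else 0) * ∏ i : Fin T, K (w i.castSucc) (w i.succ)

/-- Two edges of `K_n` share a vertex. -/
def sharesVertex {n : ℕ} (e e' : EdgeK n) : Prop := ∃ v, v ∈ e.1 ∧ v ∈ e'.1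

end

/-!
A Glauber step resamples one uniformly chosen edge `e'`, and resampling `e' ≠ e` changes
`N_G(·, e)` by `N_G(X, e, e')`. Hence the drift is
`C(n,2)⁻¹ ∑_{e' ≠ e} (σ(∂_{e'}H) - 1_{e' ∈ X}) N_G(X, e, e') / n^{|V|-2}`, `σ` the logistic
function. Since `N_{G'}(X, e') ≤ 2|E'| n^{|V'|-2} r̄^{|E'|-1}` for every pattern `G'`, we get
`∂_{e'}H ≤ Ψ(r̄)`, i.e. `σ(∂_{e'}H) ≤ φ(r̄)`. Double counting bounds the gain,
`∑_{e' ≠ e} N_G(X, e, e') ≤ ∑_{b ∈ E} N_{G - b}(X, e) ≤ 2|E|(|E|-1) n^{|V|-2} r̄^{|E|-2}`,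
and the loss: a copy rooted at `e` uses `|E| - 1` edges of `X` besides `e`, so
`∑_{e' ∈ X, e' ≠ e} N_G(X, e, e') ≥ (|E| - 1) N_G(X, e) = 2|E|(|E|-1) n^{|V|-2} r_G^{|E|-1}`.
-/

variable {n m : ℕ}

lemma mapEdge_injective (v : Fin m ↪ Fin n) : Function.Injective (mapEdge v) :=
  fun _ _ h => Subtype.ext (Sym2.map.injective v.injective (congrArg Subtype.val h))

lemma setEdge_of_eq {X : Config n} {e : EdgeK n} {b : Bool} (h : X e = b) :
    setEdge X e b = X := by
  funext f
  by_cases hf : f = e <;> simp [setEdge, hf, h]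

lemma addEdge_setEdge (X : Config n) (e : EdgeK n) (b : Bool) :
    addEdge (setEdge X e b) e = addEdge X e := by
  funext f
  by_cases hf : f = e <;> simp [addEdge, setEdge, hf]

lemma rootedCount_setEdge_self (X : Config n) (G : Finset (EdgeK m)) (e : EdgeK n) (b : Bool) :
    rootedCount (setEdge X e b) G e = rootedCount X G e := by
  simp only [rootedCount, addEdge_setEdge]

lemma rootedCount_setEdge_true {e e' : EdgeK n} (h : e' ≠ e) (X : Config n)
    (G : Finset (EdgeK m)) :
    rootedCount (setEdge X e' true) G e =
      rootedCount (setEdge X e' false) G e + rooted2Count X G e e' := by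
  rw [rootedCount, ← card_filter_add_card_filter_not (fun v => ∃ a ∈ G, mapEdge v a = e'),
    add_comm]
  simp only [filter_filter]
  congr 2
  · ext v
    simp only [mem_filter, mem_univ, true_and]
    constructor
    · rintro ⟨⟨huse, hall⟩, hnot⟩
      refine ⟨huse, fun a ha => ?_⟩
      have hne : mapEdge v a ≠ e' := fun h' => hnot ⟨a, ha, h'⟩
      simpa [addEdge, setEdge, hne] using hall a ha
    · rintro ⟨huse, hall⟩
      refine ⟨⟨huse, fun a ha => ?_⟩, fun ⟨b, hb, hbe⟩ => ?_⟩
      · by_cases hne : mapEdge v a = e'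
        · simp [addEdge, setEdge, hne]
        · simpa [addEdge, setEdge, hne] using hall a ha
      · simpa [addEdge, setEdge, hbe, h] using hall b hb
  · ext v
    have hswap : addEdge (setEdge X e' true) e = addEdge (addEdge X e) e' := by
      funext f
      by_cases hf : f = e <;> by_cases hf' : f = e' <;> simp [addEdge, setEdge, hf, hf']
    simp only [mem_filter, mem_univ, true_and, hswap]
    tauto

lemma copyCount_setEdge_true (X : Config n) (G : Finset (EdgeK m)) (e : EdgeK n) :
    copyCount (setEdge X e true) G = rootedCount X G e + copyCount (setEdge X e false) G := by
  rw [copyCount, ← card_filter_add_card_filter_not (fun v => ∃ a ∈ G, mapEdge v a = e)]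
  simp only [filter_filter]
  congr 2
  · ext v
    simp only [mem_filter, mem_univ, true_and]
    exact and_comm
  · ext v
    simp only [mem_filter, mem_univ, true_and]
    constructor
    · rintro ⟨hall, hnot⟩ a ha
      have hne : mapEdge v a ≠ e := fun h' => hnot ⟨a, ha, h'⟩
      simpa [setEdge, hne] using hall a ha
    · intro hall
      refine ⟨fun a ha => ?_, fun ⟨b, hb, hbe⟩ => ?_⟩
      · by_cases hne : mapEdge v a = e
        · simp [setEdge, hne]
        · simpa [setEdge, hne] using hall a ha
      · simpa [setEdge, hbe] using hall b hb

lemma card_embedding_apply_eq_le {i j : Fin m} (hij : i ≠ j) (x y : Fin n) :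
    #{v : Fin m ↪ Fin n | v i = x ∧ v j = y} ≤ n ^ (m - 2) := by
  let rest := ((({i, j} : Finset (Fin m))ᶜ : Finset (Fin m)) : Type)
  have hrest : Fintype.card (rest → Fin n) = n ^ (m - 2) := by
    rw [Fintype.card_fun, Fintype.card_coe, card_compl, card_pair hij, Fintype.card_fin,
      Fintype.card_fin]
  rw [← hrest, ← card_univ]
  refine card_le_card_of_injOn (fun v k => v k.1) (fun _ _ => mem_univ _) ?_
  intro v hv w hw hvw
  simp only [coe_filter, mem_univ, true_and, Set.mem_ofPred_eq] at hv hw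
  refine DFunLike.ext _ _ fun k => ?_
  by_cases hk : k ∈ ({i, j} : Finset (Fin m))
  · simp only [mem_insert, mem_singleton] at hk
    rcases hk with rfl | rfl <;> simp [hv, hw]
  · exact congrFun hvw ⟨k, mem_compl.mpr hk⟩

lemma card_mapEdge_eq_le (a : EdgeK m) (e : EdgeK n) :
    #{v : Fin m ↪ Fin n | mapEdge v a = e} ≤ 2 * n ^ (m - 2) := by
  obtain ⟨a, ha⟩ := a
  obtain ⟨e, he⟩ := e
  induction a using Sym2.ind with | h i j =>
  induction e using Sym2.ind with | h x y =>
  have hij : i ≠ j := by simpa using ha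
  calc #{v : Fin m ↪ Fin n | mapEdge v ⟨s(i, j), ha⟩ = ⟨s(x, y), he⟩}
      ≤ #(({v : Fin m ↪ Fin n | v i = x ∧ v j = y} : Finset _) ∪
          ({v : Fin m ↪ Fin n | v i = y ∧ v j = x} : Finset _)) := by
        refine card_le_card fun v hv => ?_
        simpa [mapEdge, Sym2.eq_iff] using hv
    _ ≤ n ^ (m - 2) + n ^ (m - 2) :=
        (card_union_le _ _).trans (add_le_add (card_embedding_apply_eq_le hij x y)
          (card_embedding_apply_eq_le hij y x))
    _ = 2 * n ^ (m - 2) := (two_mul _).symm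

lemma rootedCount_le (X : Config n) (G : Finset (EdgeK m)) (e : EdgeK n) :
    rootedCount X G e ≤ 2 * #G * n ^ (m - 2) := by
  calc rootedCount X G e ≤ #(G.biUnion fun a => {v : Fin m ↪ Fin n | mapEdge v a = e}) := by
        refine card_le_card fun v hv => ?_
        obtain ⟨a, ha, hae⟩ := (mem_filter.mp hv).2.1
        exact mem_biUnion.mpr ⟨a, ha, mem_filter.mpr ⟨mem_univ _, hae⟩⟩
    _ ≤ ∑ a ∈ G, #{v : Fin m ↪ Fin n | mapEdge v a = e} := card_biUnion_le
    _ ≤ ∑ _a ∈ G, 2 * n ^ (m - 2) := sum_le_sum fun a _ => card_mapEdge_eq_le a e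
    _ = 2 * #G * n ^ (m - 2) := by rw [sum_const, smul_eq_mul]; ring

open Function.Embedding in
lemma rootedCount_of_card_eq_one {P : Finset (EdgeK m)} (hm : m = 2) (hP : #P = 1)
    (X : Config n) (e : EdgeK n) : rootedCount X P e = 2 := by
  subst hm
  refine le_antisymm (by simpa [hP] using rootedCount_le X P e) ?_
  obtain ⟨⟨a, ha⟩, rfl⟩ := card_eq_one.mp hP
  obtain ⟨e, he⟩ := e
  induction a using Sym2.ind with | h i j =>
  induction e using Sym2.ind with | h x y =>
  have hij : i ≠ j := by simpa using ha
  have hxy : x ≠ y := by simpa using he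
  have hpair : #{embFinTwo hxy, embFinTwo hxy.symm} = 2 :=
    card_pair fun h => hxy (by simpa [embFinTwo_apply_zero] using DFunLike.congr_fun h 0)
  refine hpair.symm.le.trans (card_le_card fun v hv => ?_)
  have hv : s(v 0, v 1) = s(x, y) := by
    simp only [mem_insert, mem_singleton] at hv
    rcases hv with rfl | rfl <;> simp [embFinTwo_apply_zero, embFinTwo_apply_one, Sym2.eq_swap]
  have hsij : s(i, j) = s(0, 1) := by
    fin_cases i <;> fin_cases j <;> simp_all [Sym2.eq_swap]
  have hve : mapEdge v ⟨s(i, j), ha⟩ = ⟨s(x, y), he⟩ := by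
    simp only [mapEdge, hsij, Sym2.map_mk, hv]
  simp [hve, addEdge]

lemma rootedCount_div_le_one (X : Config n) (G : Finset (EdgeK m)) (e : EdgeK n) :
    (rootedCount X G e : ℝ) / (2 * #G * (n : ℝ) ^ (m - 2)) ≤ 1 := by
  refine div_le_one_of_le₀ ?_ (by positivity)
  exact_mod_cast rootedCount_le X G e

lemma rG_pow_card_sub_one (X : Config n) {G : Finset (EdgeK m)} (hG : 2 ≤ #G) (e : EdgeK n) :
    rG X G e ^ (#G - 1) = (rootedCount X G e : ℝ) / (2 * #G * (n : ℝ) ^ (m - 2)) := by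
  have hk : ((#G - 1 : ℕ) : ℝ) = (#G : ℝ) - 1 := by rw [Nat.cast_sub (by omega), Nat.cast_one]
  have hk0 : (#G : ℝ) - 1 ≠ 0 := by rw [← hk]; exact_mod_cast (by omega : #G - 1 ≠ 0)
  rw [rG, ← Real.rpow_natCast, ← Real.rpow_mul (by positivity), hk, inv_mul_cancel₀ hk0,
    Real.rpow_one]

lemma rG_le_one (X : Config n) {G : Finset (EdgeK m)} (hG : G.Nonempty) (e : EdgeK n) :
    rG X G e ≤ 1 :=
  Real.rpow_le_one (by positivity) (rootedCount_div_le_one X G e)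
    (inv_nonneg.mpr (by simpa using hG.card_pos))

lemma rG_le_rbar {L : ℕ} (hm : m ≤ L) (X : Config n) {G : Finset (EdgeK m)} (hG : 2 ≤ #G)
    (e : EdgeK n) : rG X G e ≤ rbar L n X :=
  le_csSup ⟨1, by rintro _ ⟨_, _, G', hG', e', rfl⟩; exact rG_le_one X (card_pos.mp (by omega)) _⟩
    ⟨m, hm, G, hG, e, rfl⟩

lemma rootedCount_le_rbar {L : ℕ} (hm : m ≤ L) (X : Config n) (G : Finset (EdgeK m))
    (e : EdgeK n) :
    (rootedCount X G e : ℝ) ≤ 2 * #G * (n : ℝ) ^ (m - 2) * rbar L n X ^ (#G - 1) := by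
  set D : ℝ := 2 * #G * (n : ℝ) ^ (m - 2)
  have hND : (rootedCount X G e : ℝ) ≤ D := by
    simp only [D]
    exact_mod_cast rootedCount_le X G e
  rcases Nat.lt_or_ge #G 2 with hG | hG
  · rwa [Nat.sub_eq_zero_of_le (by omega), pow_zero, mul_one]
  rcases (show 0 ≤ D by positivity).eq_or_lt with hD | hD
  · rw [← hD, zero_mul]; rwa [← hD] at hND
  calc (rootedCount X G e : ℝ) = D * rG X G e ^ (#G - 1) := by
        rw [rG_pow_card_sub_one X hG, mul_div_cancel₀ _ hD.ne']
    _ ≤ D * rbar L n X ^ (#G - 1) := by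
        gcongr
        · exact Real.rpow_nonneg (by positivity) _
        · exact rG_le_rbar hm X hG e

noncomputable def rootedCopies (X : Config n) (G : Finset (EdgeK m)) (e : EdgeK n) :
    Finset (Fin m ↪ Fin n) :=
  {v | (∃ a ∈ G, mapEdge v a = e) ∧ ∀ a ∈ G, addEdge X e (mapEdge v a) = true}

lemma card_rootedCopies (X : Config n) (G : Finset (EdgeK m)) (e : EdgeK n) :
    #(rootedCopies X G e) = rootedCount X G e := rfl

lemma rooted2Count_eq_card_filter {X : Config n} {e' : EdgeK n} (hX : X e' = true)
    (G : Finset (EdgeK m)) (e : EdgeK n) :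
    rooted2Count X G e e' = #{v ∈ rootedCopies X G e | ∃ b ∈ G, mapEdge v b = e'} := by
  have hadd : addEdge (addEdge X e) e' = addEdge X e :=
    setEdge_of_eq (by simp [addEdge, hX])
  simp only [rooted2Count, rootedCopies, hadd, filter_filter]
  congr! 2
  tauto

lemma card_sub_one_mul_rootedCount_le (X : Config n) (G : Finset (EdgeK m)) (e : EdgeK n) :
    (#G - 1) * rootedCount X G e ≤
      ∑ e' ∈ {e' | X e' = true ∧ e' ≠ e}, rooted2Count X G e e' := by
  let uses : (Fin m ↪ Fin n) → EdgeK n → Prop := fun v e' => ∃ b ∈ G, mapEdge v b = e'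
  have hcount : ∀ v ∈ rootedCopies X G e,
      #G - 1 ≤ #(({e' | X e' = true ∧ e' ≠ e} : Finset (EdgeK n)).bipartiteAbove uses v) := by
    intro v hv
    calc #G - 1 = #(G.image (mapEdge v)) - 1 := by
          rw [card_image_of_injective _ (mapEdge_injective v)]
      _ ≤ #((G.image (mapEdge v)).erase e) := pred_card_le_card_erase
      _ ≤ _ := card_le_card fun e' he' => by
          obtain ⟨hne, he'⟩ := mem_erase.mp he'
          obtain ⟨b, hb, rfl⟩ := mem_image.mp he'
          have hX := (mem_filter.mp hv).2.2 b hb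
          simp only [addEdge, hne, if_false] at hX
          simp only [bipartiteAbove, uses, mem_filter, mem_univ, true_and]
          exact ⟨⟨hX, hne⟩, b, hb, rfl⟩
  calc (#G - 1) * rootedCount X G e
      ≤ ∑ v ∈ rootedCopies X G e,
          #(({e' | X e' = true ∧ e' ≠ e} : Finset (EdgeK n)).bipartiteAbove uses v) := by
        rw [mul_comm, ← card_rootedCopies, ← smul_eq_mul]
        exact card_nsmul_le_sum _ _ _ hcount
    _ = _ := by
        rw [sum_card_bipartiteAbove_eq_sum_card_bipartiteBelow]
        refine sum_congr rfl fun e' he' => ?_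
        rw [rooted2Count_eq_card_filter (mem_filter.mp he').2.1]
        rfl

lemma sum_rooted2Count_le (X : Config n) (G : Finset (EdgeK m)) (e : EdgeK n) :
    ∑ e' ∈ univ.erase e, rooted2Count X G e e' ≤ ∑ b ∈ G, rootedCount X (G.erase b) e := by
  have hcover : ∀ e' ≠ e, rooted2Count X G e e' ≤
      ∑ b ∈ G, #{v ∈ rootedCopies X (G.erase b) e | mapEdge v b = e'} := by
    intro e' he'
    refine (card_le_card fun v hv => ?_).trans card_biUnion_le
    obtain ⟨⟨a, ha, hae⟩, ⟨b, hb, hbe'⟩, hall⟩ := (mem_filter.mp hv).2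
    have hab : a ≠ b := by rintro rfl; exact he' (hbe'.symm.trans hae)
    refine mem_biUnion.mpr ⟨b, hb, mem_filter.mpr ⟨mem_filter.mpr
      ⟨mem_univ _, ⟨a, mem_erase.mpr ⟨hab, ha⟩, hae⟩, fun c hc => ?_⟩, hbe'⟩⟩
    obtain ⟨hcb, hc⟩ := mem_erase.mp hc
    have hce' : mapEdge v c ≠ e' := fun h => hcb (mapEdge_injective v (h.trans hbe'.symm))
    have := hall c hc
    rwa [addEdge, if_neg hce'] at this
  calc ∑ e' ∈ univ.erase e, rooted2Count X G e e'
      ≤ ∑ e' ∈ univ.erase e,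
          ∑ b ∈ G, #{v ∈ rootedCopies X (G.erase b) e | mapEdge v b = e'} :=
        sum_le_sum fun e' he' => hcover e' (ne_of_mem_erase he')
    _ ≤ ∑ e', ∑ b ∈ G, #{v ∈ rootedCopies X (G.erase b) e | mapEdge v b = e'} :=
        sum_le_sum_of_subset (subset_univ _)
    _ = ∑ b ∈ G, rootedCount X (G.erase b) e := by
        rw [sum_comm]
        exact sum_congr rfl fun b _ => (card_eq_sum_card_fiberwise fun _ _ => mem_univ _).symm

noncomputable def rootedGain (X : Config n) (G : Finset (EdgeK m)) (e e' : EdgeK n) : ℝ :=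
  (rootedCount (setEdge X e' true) G e : ℝ) - rootedCount (setEdge X e' false) G e

lemma rootedGain_eq (X : Config n) (G : Finset (EdgeK m)) (e e' : EdgeK n) :
    rootedGain X G e e' = if e' = e then 0 else (rooted2Count X G e e' : ℝ) := by
  split_ifs with h
  · rw [rootedGain, h, rootedCount_setEdge_self, rootedCount_setEdge_self, sub_self]
  · rw [rootedGain, rootedCount_setEdge_true h, Nat.cast_add, add_sub_cancel_left]

lemma rootedGain_nonneg (X : Config n) (G : Finset (EdgeK m)) (e e' : EdgeK n) :
    0 ≤ rootedGain X G e e' := by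
  rw [rootedGain_eq]
  split_ifs <;> positivity

lemma sum_rootedGain_le {L : ℕ} (hm : m ≤ L) (X : Config n) {G : Finset (EdgeK m)}
    (hG : 2 ≤ #G) (e : EdgeK n) :
    ∑ e', rootedGain X G e e' ≤
      2 * #G * (#G - 1) * (n : ℝ) ^ (m - 2) * rbar L n X ^ (#G - 2) := by
  have hk : ((#G - 1 : ℕ) : ℝ) = (#G : ℝ) - 1 := by rw [Nat.cast_sub (by omega), Nat.cast_one]
  calc ∑ e', rootedGain X G e e' = ∑ e' ∈ univ.erase e, (rooted2Count X G e e' : ℝ) := by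
        rw [← sum_erase_add _ _ (mem_univ e), rootedGain_eq, if_pos rfl, add_zero]
        exact sum_congr rfl fun e' he' => by rw [rootedGain_eq, if_neg (ne_of_mem_erase he')]
    _ ≤ ∑ b ∈ G, (rootedCount X (G.erase b) e : ℝ) := by
        exact_mod_cast sum_rooted2Count_le X G e
    _ ≤ ∑ _b ∈ G, 2 * ((#G : ℝ) - 1) * (n : ℝ) ^ (m - 2) * rbar L n X ^ (#G - 2) :=
        sum_le_sum fun b hb => by
          simpa [card_erase_of_mem hb, hk, Nat.sub_sub] using
            rootedCount_le_rbar hm X (G.erase b) e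
    _ = _ := by rw [sum_const, nsmul_eq_mul]; ring

lemma card_sub_one_mul_rootedCount_le_sum_rootedGain (X : Config n) {G : Finset (EdgeK m)}
    (hG : 1 ≤ #G) (e : EdgeK n) :
    ((#G : ℝ) - 1) * rootedCount X G e ≤ ∑ e', if X e' then rootedGain X G e e' else 0 := by
  calc ((#G : ℝ) - 1) * rootedCount X G e
      ≤ ∑ e' ∈ {e' | X e' = true ∧ e' ≠ e}, (rooted2Count X G e e' : ℝ) := by
        rw [← Nat.cast_one, ← Nat.cast_sub hG]
        exact_mod_cast card_sub_one_mul_rootedCount_le X G e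
    _ = ∑ e', if X e' then rootedGain X G e e' else 0 := by
        rw [sum_filter]
        refine sum_congr rfl fun e' _ => ?_
        by_cases he' : e' = e <;> simp [rootedGain_eq, he']

lemma Real.exp_div_one_add_exp (x : ℝ) : Real.exp x / (1 + Real.exp x) = Real.sigmoid x := by
  rw [Real.sigmoid_def, Real.exp_neg]
  field_simp
  ring

lemma Real.one_div_one_add_exp (x : ℝ) : 1 / (1 + Real.exp x) = 1 - Real.sigmoid x := by
  rw [← Real.exp_div_one_add_exp]
  field_simp
  ring

lemma phiF_eq_sigmoid {s : ℕ} {V : Fin s → ℕ} (Pt : ∀ i, Finset (EdgeK (V i))) (β : Fin s → ℝ)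
    (p : ℝ) : phiF Pt β p = Real.sigmoid (PsiF Pt β p) :=
  Real.exp_div_one_add_exp _

section Model

variable {s : ℕ} (V : Fin s → ℕ) (Pt : ∀ i, Finset (EdgeK (V i))) (β : Fin s → ℝ)

lemma dH_eq_sum_rootedCount (X : Config n) (e : EdgeK n) :
    dH V Pt β n X e = ∑ i, β i * (rootedCount X (Pt i) e : ℝ) / (n : ℝ) ^ (V i - 2) := by
  simp only [dH, ergmH, ← sum_sub_distrib, copyCount_setEdge_true, Nat.cast_add]
  congr! 1 with i
  ring

lemma dH_le_PsiF_rbar {L : ℕ} (hs : 0 < s) (hVL : ∀ i, V i ≤ L) (hG1V : V ⟨0, hs⟩ = 2)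
    (hG1E : #(Pt ⟨0, hs⟩) = 1) (hβ : ∀ i : Fin s, 0 < (i : ℕ) → 0 < β i) (hn : 0 < n)
    (X : Config n) (e : EdgeK n) :
    dH V Pt β n X e ≤ PsiF Pt β (rbar L n X) := by
  rw [dH_eq_sum_rootedCount, PsiF]
  refine sum_le_sum fun i _ => ?_
  rcases Nat.eq_zero_or_pos i with hi | hi
  · -- `β 0` may be negative, so the single edge needs its exact rooted count `2`
    obtain rfl : i = ⟨0, hs⟩ := Fin.ext hi
    rw [rootedCount_of_card_eq_one hG1V hG1E, hG1E, hG1V]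
    norm_num [mul_comm]
  · rw [div_le_iff₀ (by positivity)]
    calc β i * (rootedCount X (Pt i) e : ℝ)
        ≤ β i * (2 * #(Pt i) * (n : ℝ) ^ (V i - 2) * rbar L n X ^ (#(Pt i) - 1)) :=
          mul_le_mul_of_nonneg_left (rootedCount_le_rbar (hVL i) X (Pt i) e) (hβ i hi).le
      _ = _ := by ring

lemma sum_glauber_mul (X : Config n) (f : Config n → ℝ) :
    ∑ Y, glauber V Pt β n X Y * f Y = (n.choose 2 : ℝ)⁻¹ * ∑ e,
      (Real.sigmoid (dH V Pt β n X e) * f (setEdge X e true) +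
        (1 - Real.sigmoid (dH V Pt β n X e)) * f (setEdge X e false)) := by
  simp only [glauber, mul_assoc, ← mul_sum, sum_mul]
  rw [sum_comm]
  congr! 2 with e
  simp only [add_mul, sum_add_distrib, ite_mul, zero_mul, sum_ite_eq', mem_univ, if_true,
    Real.exp_div_one_add_exp, Real.one_div_one_add_exp]

lemma sum_glauber_mul_sub (X : Config n) (f : Config n → ℝ) :
    ∑ Y, glauber V Pt β n X Y * (f Y - f X) = (n.choose 2 : ℝ)⁻¹ * ∑ e,
      (Real.sigmoid (dH V Pt β n X e) - if X e then 1 else 0) *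
        (f (setEdge X e true) - f (setEdge X e false)) := by
  rw [sum_glauber_mul]
  congr! 2 with e
  cases hX : X e <;> rw [setEdge_of_eq hX] <;> simp only [Bool.false_eq_true, if_false,
    if_true] <;> ring

lemma sum_glauber_mul_rootedCount_sub (X : Config n) (G : Finset (EdgeK m)) (e : EdgeK n)
    (c : ℝ) :
    ∑ Y, glauber V Pt β n X Y * (((rootedCount Y G e : ℝ) - rootedCount X G e) / c) =
      (n.choose 2 : ℝ)⁻¹ * ((∑ e', Real.sigmoid (dH V Pt β n X e') * rootedGain X G e e' -
        ∑ e', if X e' then rootedGain X G e e' else 0) / c) := by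
  have := sum_glauber_mul_sub V Pt β X fun Y => (rootedCount Y G e : ℝ) / c
  simp only [← sub_div] at this
  rw [this, ← sum_sub_distrib, sum_div]
  congr! 2 with e'
  simp only [rootedGain]
  split_ifs <;> ring

lemma glauber_rootedCount_drift_le {L : ℕ} (hn : 2 ≤ n) (X : Config n)
    (hdH : ∀ e', dH V Pt β n X e' ≤ PsiF Pt β (rbar L n X)) (e : EdgeK n) (hm : m ≤ L)
    {G : Finset (EdgeK m)} (hG : 2 ≤ #G) :
    ∑ Y, glauber V Pt β n X Y *
        (((rootedCount Y G e : ℝ) - rootedCount X G e) / (n : ℝ) ^ (m - 2)) ≤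
      2 / (n.choose 2 : ℝ) * #G * (#G - 1) *
        (-(rG X G e ^ (#G - 1)) + phiF Pt β (rbar L n X) * rbar L n X ^ (#G - 2)) := by
  rw [sum_glauber_mul_rootedCount_sub, phiF_eq_sigmoid, rG_pow_card_sub_one X hG e]
  set c : ℝ := (n : ℝ) ^ (m - 2)
  set Φ := Real.sigmoid (PsiF Pt β (rbar L n X))
  have hc : 0 < c := by positivity
  have hM : 0 < (n.choose 2 : ℝ) := by exact_mod_cast Nat.choose_pos hn
  have hgain : ∑ e', Real.sigmoid (dH V Pt β n X e') * rootedGain X G e e' ≤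
      Φ * (2 * #G * (#G - 1) * c * rbar L n X ^ (#G - 2)) :=
    calc ∑ e', Real.sigmoid (dH V Pt β n X e') * rootedGain X G e e'
        ≤ ∑ e', Φ * rootedGain X G e e' := sum_le_sum fun e' _ =>
          mul_le_mul_of_nonneg_right (Real.sigmoid_le (hdH e')) (rootedGain_nonneg X G e e')
      _ = Φ * ∑ e', rootedGain X G e e' := (mul_sum _ _ _).symm
      _ ≤ _ := mul_le_mul_of_nonneg_left (sum_rootedGain_le hm X hG e) (Real.sigmoid_nonneg _)
  have hloss := card_sub_one_mul_rootedCount_le_sum_rootedGain X (by omega : 1 ≤ #G) e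
  calc (n.choose 2 : ℝ)⁻¹ * ((∑ e', Real.sigmoid (dH V Pt β n X e') * rootedGain X G e e' -
        ∑ e', if X e' then rootedGain X G e e' else 0) / c)
      ≤ (n.choose 2 : ℝ)⁻¹ * ((Φ * (2 * #G * (#G - 1) * c * rbar L n X ^ (#G - 2)) -
          (#G - 1) * rootedCount X G e) / c) := by
        gcongr
    _ = _ := by
        simp only [c]
        field_simp
        ring

end Model

theorem glauber_drift_bound_general
    {L s : ℕ} (hs : 0 < s)
    (V : Fin s → ℕ) (Pt : ∀ i, Finset (EdgeK (V i))) (β : Fin s → ℝ)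
    (hVL : ∀ i, V i ≤ L)
    (hG1V : V ⟨0, hs⟩ = 2) (hG1E : (Pt ⟨0, hs⟩).card = 1)
    (hβ : ∀ i : Fin s, 0 < (i : ℕ) → 0 < β i) :
    ∀ ε : ℝ, 0 < ε → ∃ N : ℕ, ∀ n ≥ N, ∀ X : Config n, ∀ e : EdgeK n,
      ∀ m : ℕ, m ≤ L → ∀ G : Finset (EdgeK m), 2 ≤ G.card →
        ∑ Y : Config n, glauber V Pt β n X Y *
            (((rootedCount Y G e : ℝ) - (rootedCount X G e : ℝ)) / (n : ℝ) ^ (m - 2)) ≤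
          2 / (n.choose 2 : ℝ) * (G.card : ℝ) * ((G.card : ℝ) - 1) *
              (-(rG X G e ^ (G.card - 1)) +
                phiF Pt β (rbar L n X) * rbar L n X ^ (G.card - 2)) +
            ε / (n : ℝ) ^ 2 := by
  intro ε hε
  refine ⟨2, fun n hn X e m hm G hG => ?_⟩
  have hdH := dH_le_PsiF_rbar V Pt β hs hVL hG1V hG1E hβ (by omega) X
  have hdrift := glauber_rootedCount_drift_le V Pt β hn X hdH e hm hG
  have hε' : 0 < ε / (n : ℝ) ^ 2 := by positivity
  linarith

/-- **Drift bound (Lemma 6).** For every `ε > 0`, for all large `n`, every configuration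
`X`, edge `e` and graph `G` on at most `L` vertices with at least two edges, the expected
one-step change of `N_G(X,e)/n^(|V|-2)` is at most
`(2/C(n,2))·|E|·(|E|-1)·[-r_G(X,e)^(|E|-1) + φ(r̄(X))·r̄(X)^(|E|-2)] + ε/n²`. -/
theorem glauber_drift_bound
    {L s : ℕ} (hL : 2 ≤ L) (hs : 0 < s)
    (V : Fin s → ℕ) (Pt : ∀ i, Finset (EdgeK (V i))) (β : Fin s → ℝ)
    (hV2 : ∀ i, 2 ≤ V i) (hVL : ∀ i, V i ≤ L)
    (hG1V : V ⟨0, hs⟩ = 2) (hG1E : (Pt ⟨0, hs⟩).card = 1)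
    (hβ : ∀ i : Fin s, 0 < (i : ℕ) → 0 < β i) :
    ∀ ε : ℝ, 0 < ε → ∃ N : ℕ, ∀ n ≥ N, ∀ X : Config n, ∀ e : EdgeK n,
      ∀ m : ℕ, m ≤ L → ∀ G : Finset (EdgeK m), 2 ≤ G.card →
        ∑ Y : Config n, glauber V Pt β n X Y *
            (((rootedCount Y G e : ℝ) - (rootedCount X G e : ℝ)) / (n : ℝ) ^ (m - 2)) ≤
          2 / (n.choose 2 : ℝ) * (G.card : ℝ) * ((G.card : ℝ) - 1) *
              (-(rG X G e ^ (G.card - 1)) +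
                phiF Pt β (rbar L n X) * rbar L n X ^ (G.card - 2)) +
            ε / (n : ℝ) ^ 2 :=
  glauber_drift_bound_general hs V Pt β hVL hG1V hG1E hβ
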